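/- For every n ≥ 2, the polynomial P_{n+1}(x) := (n+1)·S_n(x) - x·S_n'(x) has only real zeros, all in (-∞,0), and the zeros of P_{n+1} and S_n interlace with P_{n+1} alternating left of S_n (i.e., between consecutive zeros of S_n there is exactly one zero of P_{n+1}, plus one additional zero of P_{n+1} below the smallest zero of S_n). -/

import Mathlib

open Polynomial in
/-- The descent polynomials `S_n(x)` of simsun permutations, defined by `S_0(x) = 1` and
`S_{n+1}(x) = (1 + n x)·S_n(x) + x(1 - 2x)·S_n'(x)`. -/
noncomputable def Spoly : ℕ → Polynomial ℝ
  | 0 => 1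
  | n + 1 =>
      (1 + Polynomial.C (n : ℝ) * X) * Spoly n + X * (1 - 2 * X) * (Spoly n).derivative

open Polynomial in
/-- `P_{n+1}(x) = (n+1)·S_n(x) - x·S_n'(x)`, the interior-peak polynomial of simsun
permutations of `[n+1]`. -/
noncomputable def Ppoly (n : ℕ) : Polynomial ℝ :=
  Polynomial.C ((n : ℝ) + 1) * Spoly n - X * (Spoly n).derivative

/-!
Induction on `n`. If `θ₁ < ⋯ < θ_m < 0` are the simple zeros of `S_n`, then `S_n'` alternates in
sign along them, and at a zero `θ` of `S_n` the recurrence and the definition of `P_{n+1}` give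
`S_{n+1}(θ) = θ(1 - 2θ) S_n'(θ)` and `P_{n+1}(θ) = -θ S_n'(θ)`, with `θ(1 - 2θ) < 0 < -θ`. So both
polynomials alternate in sign along the `θ`'s. Adding the point `0`, where `S_{n+1}(0) = 1`, and,
when the degree is one larger than the number of sign changes found so far, a point far to the
left, where the sign is that of `(-1)^deg`, produces as many sign changes as the degree; the
intermediate value theorem then locates every zero, one in each gap.
-/

open Polynomial Finset Filter

theorem Polynomial.eventually_atBot_neg_one_pow_natDegree_mul_eval_pos {q : ℝ[X]}
    (hdeg : 0 < q.degree) (hlc : 0 < q.leadingCoeff) :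
    ∀ᶠ x in atBot, 0 < (-1) ^ q.natDegree * q.eval x := by
  -- `r x = (-1) ^ deg q * q (-x)` has the leading coefficient of `q`.
  set r := C ((-1) ^ q.natDegree) * q.comp (-X)
  have hX : (-X : ℝ[X]).natDegree = 1 := by rw [natDegree_neg, natDegree_X]
  have hr_deg : r.natDegree = q.natDegree := by
    rw [natDegree_C_mul (by simp), natDegree_comp, hX, mul_one]
  have hr_lc : r.leadingCoeff = q.leadingCoeff := by
    rw [leadingCoeff_mul, leadingCoeff_C, leadingCoeff_comp (by rw [hX]; exact one_ne_zero),
      leadingCoeff_neg, leadingCoeff_X, mul_left_comm, ← mul_pow, neg_one_mul, neg_neg, one_pow,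
      mul_one]
  have hr : Tendsto r.eval atTop atTop := r.tendsto_atTop_of_leadingCoeff_nonneg
    (natDegree_pos_iff_degree_pos.1 (hr_deg ▸ natDegree_pos_iff_degree_pos.2 hdeg))
    (hr_lc ▸ hlc.le)
  filter_upwards [tendsto_neg_atBot_atTop.eventually (hr.eventually_gt_atTop 0)] with x hx
  simpa [r] using hx

-- `q` changes sign between consecutive points of `t` and is positive at the last one.
def SignsAlternate (q : ℝ[X]) {k : ℕ} (t : Fin k → ℝ) : Prop :=
  ∀ i : Fin k, 0 < (-1) ^ (i.rev : ℕ) * q.eval (t i)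

namespace SignsAlternate

variable {q : ℝ[X]} {k : ℕ}

lemma cons {t : Fin k → ℝ} (h : SignsAlternate q t) {x : ℝ} (hx : 0 < (-1) ^ k * q.eval x) :
    SignsAlternate q (Fin.cons x t : Fin (k + 1) → ℝ) := by
  intro i
  cases i using Fin.cases with
  | zero => simpa using hx
  | succ i => simpa [Fin.rev_succ] using h i

lemma snoc {t : Fin k → ℝ} (h : SignsAlternate (-q) t) {x : ℝ} (hx : 0 < q.eval x) :
    SignsAlternate q (Fin.snoc t x : Fin (k + 1) → ℝ) := by
  intro i
  cases i using Fin.lastCases with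
  | last => simpa using hx
  | cast i => simpa [Fin.rev_castSucc, pow_succ] using h i

lemma exists_isRoot_mem_Ioo {t : Fin (k + 1) → ℝ} (ht : StrictMono t) (h : SignsAlternate q t)
    (i : Fin k) : ∃ x ∈ Set.Ioo (t i.castSucc) (t i.succ), q.IsRoot x := by
  have h₁ := h i.castSucc
  have h₂ := h i.succ
  simp only [Fin.rev_castSucc, Fin.rev_succ, Fin.val_succ, Fin.val_castSucc, pow_succ] at h₁ h₂
  obtain ⟨x, hx, hx0⟩ := intermediate_value_Ioo (ht Fin.castSucc_lt_succ).le
    (C ((-1) ^ (i.rev : ℕ)) * q).continuous.continuousOn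
    (by simp only [eval_mul, eval_C]; exact ⟨by linarith, h₂⟩)
  exact ⟨x, hx, by simpa using hx0⟩

theorem exists_roots_eq {t : Fin (k + 1) → ℝ} (ht : StrictMono t) (h : SignsAlternate q t)
    (hdeg : q.natDegree ≤ k) :
    ∃ ξ : Fin k → ℝ, StrictMono ξ ∧ (∀ i, t i.castSucc < ξ i ∧ ξ i < t i.succ) ∧
      q.roots = Multiset.map ξ univ.val ∧ q.natDegree = k := by
  choose ξ hξ hroot using h.exists_isRoot_mem_Ioo ht
  have hq : q ≠ 0 := by
    rintro rfl
    simpa using h 0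
  have hξ_mono : StrictMono ξ := fun i j hij =>
    calc ξ i < t i.succ := (hξ i).2
      _ ≤ t j.castSucc := ht.monotone (Fin.succ_le_castSucc_iff.2 hij)
      _ < ξ j := (hξ j).1
  have hle : Multiset.map ξ univ.val ≤ q.roots := by
    rw [Multiset.le_iff_subset (univ.nodup.map hξ_mono.injective)]
    intro x hx
    obtain ⟨i, -, rfl⟩ := Multiset.mem_map.1 hx
    exact (mem_roots hq).2 (hroot i)
  have hcard : (Multiset.map ξ univ.val).card = k := by simp
  have hroots := Multiset.eq_of_le_of_card_le hle (by rw [hcard]; exact q.card_roots'.trans hdeg)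
  refine ⟨ξ, hξ_mono, hξ, hroots.symm, le_antisymm hdeg ?_⟩
  calc k = (Multiset.map ξ univ.val).card := hcard.symm
    _ ≤ q.natDegree := hroots ▸ q.card_roots'

lemma exists_cons {t : Fin k → ℝ} (h : SignsAlternate q t) (ht : StrictMono t)
    (hdeg : q.natDegree = k) (hk : 0 < k) (hlc : 0 < q.leadingCoeff) :
    ∃ x, StrictMono (Fin.cons x t : Fin (k + 1) → ℝ) ∧
      SignsAlternate q (Fin.cons x t : Fin (k + 1) → ℝ) := by
  obtain ⟨c, hc⟩ := (Set.finite_range t).bddBelow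
  obtain ⟨x, hx, hxc⟩ := ((eventually_atBot_neg_one_pow_natDegree_mul_eval_pos
    (natDegree_pos_iff_degree_pos.1 (hdeg ▸ hk)) hlc).and (eventually_lt_atBot c)).exists
  refine ⟨x, Fin.strictMono_cons.2 ⟨fun j => hxc.trans_le (hc ⟨j, rfl⟩), ht⟩, h.cons ?_⟩
  rwa [← hdeg]

end SignsAlternate

theorem Polynomial.eval_derivative_of_roots_eq {K : Type*} [Field K] {p : K[X]} {m : ℕ}
    {θ : Fin m → K} (hθ : Function.Injective θ) (hroots : p.roots = Multiset.map θ univ.val)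
    (hdeg : p.natDegree = m) (i : Fin m) :
    (derivative p).eval (θ i) = p.leadingCoeff * ∏ j ∈ univ.erase i, (θ i - θ j) := by
  classical
  have hsplit : p.roots.card = p.natDegree := by simp [hroots, hdeg]
  have hmem : θ i ∈ p.roots := hroots ▸ Multiset.mem_map_of_mem θ (mem_univ i)
  conv_lhs => rw [← C_leadingCoeff_mul_prod_multiset_X_sub_C hsplit]
  rw [derivative_C_mul, eval_mul, eval_C, eval_multiset_prod_X_sub_C_derivative hmem, hroots,
    ← Multiset.map_erase θ hθ, Multiset.map_map, ← erase_val]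
  rfl

lemma StrictMono.neg_one_pow_rev_mul_prod_erase_sub_pos {m : ℕ} {θ : Fin m → ℝ}
    (hθ : StrictMono θ) (i : Fin m) :
    0 < (-1) ^ (i.rev : ℕ) * ∏ j ∈ univ.erase i, (θ i - θ j) := by
  have hsplit : univ.erase i = Iio i ∪ Ioi i := by
    ext j
    simp only [mem_erase, mem_univ, and_true, mem_union, mem_Iio, mem_Ioi]
    exact ne_iff_lt_or_gt
  have hcard : #(Ioi i) = i.rev := by rw [Fin.card_Ioi, Fin.val_rev]; omega
  have hIoi : ∏ j ∈ Ioi i, (θ i - θ j) = (-1) ^ (i.rev : ℕ) * ∏ j ∈ Ioi i, (θ j - θ i) := by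
    rw [← hcard, ← prod_neg]
    simp only [neg_sub]
  have hsq : ((-1 : ℝ) ^ (i.rev : ℕ)) * (-1) ^ (i.rev : ℕ) = 1 := by
    rw [← pow_add, Even.neg_one_pow ⟨_, rfl⟩]
  have hlt : 0 < (∏ j ∈ Iio i, (θ i - θ j)) * ∏ j ∈ Ioi i, (θ j - θ i) :=
    mul_pos (prod_pos fun j hj => sub_pos.2 (hθ (mem_Iio.1 hj)))
      (prod_pos fun j hj => sub_pos.2 (hθ (mem_Ioi.1 hj)))
  rw [hsplit, prod_union (disjoint_left.2 fun j hj hj' => lt_asymm (mem_Iio.1 hj) (mem_Ioi.1 hj')),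
    hIoi]
  linear_combination hlt - ((∏ j ∈ Iio i, (θ i - θ j)) * ∏ j ∈ Ioi i, (θ j - θ i)) * hsq

theorem signsAlternate_derivative {p : ℝ[X]} {m : ℕ} {θ : Fin m → ℝ} (hθ : StrictMono θ)
    (hroots : p.roots = Multiset.map θ univ.val) (hdeg : p.natDegree = m)
    (hlc : 0 < p.leadingCoeff) : SignsAlternate (derivative p) θ := fun i => by
  rw [eval_derivative_of_roots_eq hθ.injective hroots hdeg, mul_left_comm]
  exact mul_pos hlc (hθ.neg_one_pow_rev_mul_prod_erase_sub_pos i)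

theorem Polynomial.leadingCoeff_pos_of_roots_neg {p : ℝ[X]} (hsplit : p.roots.card = p.natDegree)
    (hneg : ∀ x ∈ p.roots, x < 0) (h0 : 0 < p.eval 0) : 0 < p.leadingCoeff := by
  have h := C_leadingCoeff_mul_prod_multiset_X_sub_C hsplit
  rw [← h, eval_mul, eval_C, eval_multiset_prod, Multiset.map_map] at h0
  refine pos_of_mul_pos_left h0 (Multiset.prod_pos fun y hy => ?_).le
  obtain ⟨x, hx, rfl⟩ := Multiset.mem_map.1 hy
  simpa using hneg x hx

structure HasNegSimpleRoots (p : ℝ[X]) {m : ℕ} (θ : Fin m → ℝ) : Prop where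
  strictMono : StrictMono θ
  neg : ∀ i, θ i < 0
  roots_eq : p.roots = Multiset.map θ univ.val
  natDegree_eq : p.natDegree = m

namespace HasNegSimpleRoots

variable {p : ℝ[X]} {m : ℕ} {θ : Fin m → ℝ}

lemma isRoot (h : HasNegSimpleRoots p θ) (i : Fin m) : p.IsRoot (θ i) :=
  isRoot_of_mem_roots (h.roots_eq ▸ Multiset.mem_map_of_mem θ (mem_univ i))

lemma leadingCoeff_pos (h : HasNegSimpleRoots p θ) (h0 : 0 < p.eval 0) : 0 < p.leadingCoeff := by
  refine leadingCoeff_pos_of_roots_neg (by simp [h.roots_eq, h.natDegree_eq]) ?_ h0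
  intro x hx
  obtain ⟨i, -, rfl⟩ := Multiset.mem_map.1 (h.roots_eq ▸ hx)
  exact h.neg i

lemma strictMono_snoc_zero (h : HasNegSimpleRoots p θ) :
    StrictMono (Fin.snoc θ 0 : Fin (m + 1) → ℝ) := by
  rw [← Fin.insertNth_last', Fin.strictMono_insertNth_iff]
  exact ⟨h.strictMono, fun i _ => h.neg i, fun i hi => absurd hi (by simp)⟩

end HasNegSimpleRoots

lemma SignsAlternate.exists_hasNegSimpleRoots {q : ℝ[X]} {k : ℕ} {t : Fin (k + 1) → ℝ}
    (h : SignsAlternate q t) (ht : StrictMono t) (hlast : t (Fin.last k) ≤ 0)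
    (hdeg : q.natDegree ≤ k) : ∃ ξ : Fin k → ℝ, HasNegSimpleRoots q ξ := by
  obtain ⟨ξ, hξ, hξt, hroots, hdeg⟩ := h.exists_roots_eq ht hdeg
  exact ⟨ξ, ⟨hξ, fun i => (hξt i).2.trans_le ((ht.monotone (Fin.le_last _)).trans hlast),
    hroots, hdeg⟩⟩

lemma Spoly_succ (n : ℕ) : Spoly (n + 1) =
    (1 + C (n : ℝ) * X) * Spoly n + X * (1 - 2 * X) * derivative (Spoly n) := rfl

lemma eval_zero_Spoly (n : ℕ) : (Spoly n).eval 0 = 1 := by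
  induction n with
  | zero => simp [Spoly]
  | succ n ih => simp [Spoly_succ, ih]

lemma Spoly_ne_zero (n : ℕ) : Spoly n ≠ 0 := fun h => by
  simpa [h] using eval_zero_Spoly n

lemma eval_Spoly_succ_of_isRoot {n : ℕ} {x : ℝ} (h : (Spoly n).IsRoot x) :
    (Spoly (n + 1)).eval x = x * (1 - 2 * x) * (derivative (Spoly n)).eval x := by
  simp [Spoly_succ, h.eq_zero]

lemma coeff_Spoly_succ_succ (n k : ℕ) : (Spoly (n + 1)).coeff (k + 1) =
    (k + 2) * (Spoly n).coeff (k + 1) + (n - 2 * k) * (Spoly n).coeff k := by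
  have h : Spoly (n + 1) = Spoly n + C (n : ℝ) * (X * Spoly n) + X * derivative (Spoly n) -
      C 2 * (X * (X * derivative (Spoly n))) := by
    rw [Spoly_succ, C_ofNat]; ring
  rcases k with _ | k <;>
    simp only [h, coeff_sub, coeff_add, coeff_C_mul, coeff_X_mul, coeff_X_mul_zero,
      coeff_derivative] <;> push_cast <;> ring

lemma natDegree_Spoly_le (n : ℕ) : (Spoly n).natDegree ≤ n / 2 := by
  induction n with
  | zero => simp [Spoly]
  | succ n ih =>
    rw [natDegree_le_iff_coeff_eq_zero] at ih ⊢
    intro N hN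
    obtain ⟨k, rfl⟩ : ∃ k, N = k + 1 := ⟨N - 1, by omega⟩
    rw [coeff_Spoly_succ_succ, ih (k + 1) (by omega)]
    -- if `k = n / 2` then `n` is even, and the factor `n - 2 * k` kills the top coefficient
    rcases (show n / 2 < k ∨ n = 2 * k by omega) with hk | rfl
    · rw [ih k hk]; ring
    · push_cast; ring

lemma coeff_Spoly_succ_of_natDegree_eq {n m : ℕ} (h : (Spoly n).natDegree = m) :
    (Spoly (n + 1)).coeff (m + 1) = (n - 2 * m) * (Spoly n).leadingCoeff := by
  rw [coeff_Spoly_succ_succ, coeff_eq_zero_of_natDegree_lt (by omega), leadingCoeff, h]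
  ring

lemma natDegree_leadingCoeff_Spoly_succ_of_odd {n m : ℕ} (hn : n = 2 * m + 1)
    (h : (Spoly n).natDegree = m) :
    (Spoly (n + 1)).natDegree = m + 1 ∧ (Spoly (n + 1)).leadingCoeff = (Spoly n).leadingCoeff := by
  have hcoeff : (Spoly (n + 1)).coeff (m + 1) = (Spoly n).leadingCoeff := by
    rw [coeff_Spoly_succ_of_natDegree_eq h, hn]
    push_cast
    ring
  have hdeg : (Spoly (n + 1)).natDegree = m + 1 :=
    natDegree_eq_of_le_of_coeff_ne_zero ((natDegree_Spoly_le _).trans (by omega))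
      (hcoeff ▸ leadingCoeff_ne_zero.2 (Spoly_ne_zero n))
  exact ⟨hdeg, by rw [leadingCoeff, hdeg, hcoeff]⟩

lemma eval_Ppoly_of_isRoot {n : ℕ} {x : ℝ} (h : (Spoly n).IsRoot x) :
    (Ppoly n).eval x = -x * (derivative (Spoly n)).eval x := by
  simp [Ppoly, h.eq_zero]

lemma coeff_Ppoly (n k : ℕ) : (Ppoly n).coeff k = (n + 1 - k) * (Spoly n).coeff k := by
  cases k <;> simp only [Ppoly, coeff_sub, coeff_C_mul, coeff_X_mul, coeff_X_mul_zero,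
    coeff_derivative] <;> push_cast <;> ring

lemma natDegree_Ppoly (n : ℕ) : (Ppoly n).natDegree = (Spoly n).natDegree := by
  have hd : ((Spoly n).natDegree : ℝ) < n + 1 := by
    exact_mod_cast (natDegree_Spoly_le n).trans_lt (by omega)
  refine natDegree_eq_of_le_of_coeff_ne_zero ?_ ?_
  · rw [natDegree_le_iff_coeff_eq_zero]
    intro N hN
    rw [coeff_Ppoly, coeff_eq_zero_of_natDegree_lt hN, mul_zero]
  · rw [coeff_Ppoly]
    exact mul_ne_zero (by linarith) (leadingCoeff_ne_zero.2 (Spoly_ne_zero n))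

lemma leadingCoeff_Ppoly (n : ℕ) :
    (Ppoly n).leadingCoeff = (n + 1 - (Spoly n).natDegree) * (Spoly n).leadingCoeff := by
  rw [leadingCoeff, natDegree_Ppoly, coeff_Ppoly]
  rfl

namespace HasNegSimpleRoots

variable {m : ℕ} {θ : Fin m → ℝ}

lemma signsAlternate_derivative_Spoly {n : ℕ} (h : HasNegSimpleRoots (Spoly n) θ) :
    SignsAlternate (derivative (Spoly n)) θ :=
  signsAlternate_derivative h.strictMono h.roots_eq h.natDegree_eq
    (h.leadingCoeff_pos (by simp [eval_zero_Spoly]))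

lemma signsAlternate_Spoly_succ {n : ℕ} (h : HasNegSimpleRoots (Spoly n) θ) :
    SignsAlternate (Spoly (n + 1)) (Fin.snoc θ 0 : Fin (m + 1) → ℝ) := by
  refine SignsAlternate.snoc (fun i => ?_) (by simp [eval_zero_Spoly])
  have hc : 0 < -(θ i * (1 - 2 * θ i)) := by nlinarith [h.neg i]
  have := mul_pos hc (h.signsAlternate_derivative_Spoly i)
  rw [eval_neg, eval_Spoly_succ_of_isRoot (h.isRoot i)]
  linarith

lemma signsAlternate_Ppoly {n : ℕ} (h : HasNegSimpleRoots (Spoly n) θ) :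
    SignsAlternate (Ppoly n) θ := fun i => by
  have := mul_pos (neg_pos.2 (h.neg i)) (h.signsAlternate_derivative_Spoly i)
  rw [eval_Ppoly_of_isRoot (h.isRoot i)]
  linarith

lemma exists_Spoly_succ {n : ℕ} {θ : Fin (n / 2) → ℝ}
    (h : HasNegSimpleRoots (Spoly n) θ) :
    ∃ ξ : Fin ((n + 1) / 2) → ℝ, HasNegSimpleRoots (Spoly (n + 1)) ξ := by
  have hs := h.signsAlternate_Spoly_succ
  have ht := h.strictMono_snoc_zero
  rcases Nat.even_or_odd' n with ⟨m, rfl | hn⟩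
  · have hm : (2 * m + 1) / 2 = 2 * m / 2 := by omega
    rw [hm]
    exact hs.exists_hasNegSimpleRoots ht (by simp) (hm ▸ natDegree_Spoly_le _)
  · have hm : (n + 1) / 2 = n / 2 + 1 := by omega
    obtain ⟨hdeg, hlc⟩ :=
      natDegree_leadingCoeff_Spoly_succ_of_odd hn (h.natDegree_eq.trans (by omega))
    obtain ⟨x, hx, hxs⟩ := hs.exists_cons ht (by omega) (Nat.succ_pos _)
      (hlc ▸ h.leadingCoeff_pos (by simp [eval_zero_Spoly]))
    rw [hm]
    exact hxs.exists_hasNegSimpleRoots hx (by simp) (by omega)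

end HasNegSimpleRoots

theorem exists_hasNegSimpleRoots_Spoly (n : ℕ) (hn : 2 ≤ n) :
    ∃ θ : Fin (n / 2) → ℝ, HasNegSimpleRoots (Spoly n) θ := by
  induction n, hn using Nat.le_induction with
  | base =>
    have hS : Spoly 2 = X - C (-1) := by simp [Spoly, add_comm]
    refine ⟨fun _ => -1, ⟨fun i j hij => absurd hij (by omega), fun _ => by norm_num, ?_, ?_⟩⟩
    · rw [hS, roots_X_sub_C]
      rfl
    · rw [hS, natDegree_X_sub_C]
  | succ n _ ih =>
    obtain ⟨θ, hθ⟩ := ih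
    exact hθ.exists_Spoly_succ

/-- For every `n ≥ 2` the polynomial `P_{n+1}(x) = (n+1)·S_n(x) - x·S_n'(x)` has only
real zeros, all simple and in `(-∞,0)`, and `P_{n+1}` alternates left of `S_n`:
writing `ξ` for the zeros of `P_{n+1}` and `θ` for those of `S_n` (both of degree
`⌊n/2⌋`), we have `ξ₁ < θ₁ < ξ₂ < θ₂ < ⋯ < ξ_m < θ_m`; in particular between any two
consecutive zeros of `S_n` lies exactly one zero of `P_{n+1}`, and one additional zero
of `P_{n+1}` lies below the smallest zero of `S_n`. -/
theorem stmt9 (n : ℕ) (hn : 2 ≤ n) :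
    ∃ ξ θ : Fin (n / 2) → ℝ,
      StrictMono ξ ∧ StrictMono θ ∧
      (∀ i, ξ i < 0) ∧
      (Ppoly n).natDegree = n / 2 ∧ (Spoly n).natDegree = n / 2 ∧
      (Ppoly n).roots = Multiset.map ξ (Finset.univ : Finset (Fin (n / 2))).val ∧
      (Spoly n).roots = Multiset.map θ (Finset.univ : Finset (Fin (n / 2))).val ∧
      (∀ i, ξ i < θ i) ∧
      (∀ i : ℕ, (h : i + 1 < n / 2) → θ ⟨i, Nat.lt_of_succ_lt h⟩ < ξ ⟨i + 1, h⟩) := by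
  obtain ⟨θ, hθ⟩ := exists_hasNegSimpleRoots_Spoly n hn
  have hdeg : (Ppoly n).natDegree = n / 2 := (natDegree_Ppoly n).trans hθ.natDegree_eq
  have hlc : 0 < (Ppoly n).leadingCoeff := by
    rw [leadingCoeff_Ppoly, hθ.natDegree_eq]
    refine mul_pos ?_ (hθ.leadingCoeff_pos (by simp [eval_zero_Spoly]))
    have : ((n / 2 : ℕ) : ℝ) ≤ n := by exact_mod_cast Nat.div_le_self n 2
    linarith
  obtain ⟨t₀, ht, hs⟩ := hθ.signsAlternate_Ppoly.exists_cons hθ.strictMono hdeg (by omega) hlc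
  obtain ⟨ξ, hξ, hξθ, hroots, -⟩ := hs.exists_roots_eq ht hdeg.le
  have hlt : ∀ i, ξ i < θ i := fun i => by simpa using (hξθ i).2
  refine ⟨ξ, θ, hξ, hθ.strictMono, fun i => (hlt i).trans (hθ.neg i), hdeg, hθ.natDegree_eq,
    hroots, hθ.roots_eq, hlt, fun i h => ?_⟩
  exact (Fin.cons_succ (α := fun _ => ℝ) t₀ θ _).symm.trans_lt (hξθ ⟨i + 1, h⟩).1
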